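/- arXiv:2203.17160 — 3 statements merged into one kernel-verified Lean document; each statement's English description precedes it below -/
import Mathlib

section
/- The two-dimensional Lebesgue area of the intersection of the set C = {y ∈ ℝ⁴ : |y₁/√2 + y₃/√2| + |y₂/√2 − y₄/√2| + |(y₁−y₂−y₃−y₄)/2| + |(y₁+y₂−y₃+y₄)/2| ≤ 1} with the coordinate plane span(e₁,e₂) equals 8/(4+3√2) = 12√2 − 16. -/
open Real MeasureTheory

/-! Since `|x - y| + |x + y| = 2 max(|x|, |y|)`, the section is the octagon
`c (|x| + |y|) + max(|x|, |y|) ≤ 1` with `c = 1/√2`. Its slice over `x` is `|y| ≤ w(|x|)`, where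
`w` is piecewise linear with a kink at `1/(1 + 2c)` (the vertex on the diagonal) and vanishes at
`1/(1 + c)`. So the area is `4 ∫₀^{1/(1+c)} w = 4 / ((1 + c)(1 + 2c))`, which is `8/(4 + 3√2)`
for `c = 1/√2`. -/

open Set

theorem abs_sub_add_abs_add (x y : ℝ) : |x - y| + |x + y| = 2 * max |x| |y| := by
  grind [abs_cases, max_cases]

theorem integral_const_sub_mul (p q a b : ℝ) :
    ∫ x in a..b, (p - q * x) = (b - a) * p - q * ((b ^ 2 - a ^ 2) / 2) := by
  rw [intervalIntegral.integral_sub (g := fun x => q * x) intervalIntegrable_const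
      ((continuous_const.mul continuous_id).intervalIntegrable _ _),
    intervalIntegral.integral_const_mul, integral_id, intervalIntegral.integral_const, smul_eq_mul]

theorem MeasureTheory.Measure.prod_setOf_abs_snd_le {α : Type*} [MeasurableSpace α]
    (μ : Measure α) [SFinite μ] {w : α → ℝ} (hw : Measurable w) :
    μ.prod volume {p : α × ℝ | |p.2| ≤ w p.1} = ∫⁻ x, ENNReal.ofReal (2 * w x) ∂μ := by
  have hmeas : MeasurableSet {p : α × ℝ | |p.2| ≤ w p.1} :=
    measurableSet_le measurable_snd.abs (hw.comp measurable_fst)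
  rw [Measure.prod_apply hmeas]
  congr 1 with x
  have : Prod.mk x ⁻¹' {p : α × ℝ | |p.2| ≤ w p.1} = Icc (-w x) (w x) := by
    ext y
    simp [abs_le]
  rw [this, Real.volume_Icc, sub_neg_eq_add, two_mul]

open intervalIntegral in
theorem lintegral_ofReal_comp_abs {f : ℝ → ℝ} (hf : Continuous f) {r : ℝ} (hr : 0 ≤ r)
    (hf_nonneg : ∀ x ∈ Icc 0 r, 0 ≤ f x) (hf_nonpos : ∀ x, r ≤ x → f x ≤ 0) :
    ∫⁻ x, ENNReal.ofReal (f |x|) = ENNReal.ofReal (2 * ∫ x in 0..r, f x) := by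
  set g : ℝ → ℝ := fun x => max (f x) 0
  have hg_zero : ∀ x, r ≤ x → g x = 0 := fun x hx => max_eq_right (hf_nonpos x hx)
  have hg_supp : HasCompactSupport (fun x => g |x|) :=
    HasCompactSupport.intro isCompact_Icc fun x hx => hg_zero _ (not_le.1 (hx ∘ abs_le.1)).le
  have hg_int : Integrable (fun x => g |x|) :=
    ((hf.max continuous_const).comp continuous_abs).integrable_of_hasCompactSupport hg_supp
  calc ∫⁻ x, ENNReal.ofReal (f |x|)
      = ∫⁻ x, ENNReal.ofReal (g |x|) := by simp [g]
    _ = ENNReal.ofReal (∫ x, g |x|) :=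
      (ofReal_integral_eq_lintegral_ofReal hg_int (ae_of_all _ fun _ => le_max_right _ _)).symm
    _ = ENNReal.ofReal (2 * ∫ x in Ioc 0 r, g x) := by
      rw [integral_comp_abs, setIntegral_eq_of_subset_of_forall_sdiff_eq_zero measurableSet_Ioi
        Ioc_subset_Ioi_self fun x hx => hg_zero x (not_le.1 fun h => hx.2 ⟨hx.1, h⟩).le]
    _ = ENNReal.ofReal (2 * ∫ x in 0..r, f x) := by
      rw [integral_of_le hr, setIntegral_congr_fun measurableSet_Ioc fun x hx =>
        max_eq_left (hf_nonneg x (Ioc_subset_Icc_self hx))]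

def octagon (c : ℝ) : Set (ℝ × ℝ) := {p | c * (|p.1| + |p.2|) + max |p.1| |p.2| ≤ 1}

noncomputable def octagonHalfWidth (c a : ℝ) : ℝ :=
  min ((1 - (1 + c) * a) / c) ((1 - c * a) / (1 + c))

section octagon

variable {c : ℝ}

theorem mem_octagon_iff (hc : 0 < c) {p : ℝ × ℝ} :
    p ∈ octagon c ↔ |p.2| ≤ octagonHalfWidth c |p.1| := by
  rw [octagon, mem_ofPred_eq, octagonHalfWidth, ← le_sub_iff_add_le', max_le_iff, le_min_iff,
    le_div_iff₀ hc, le_div_iff₀ (by positivity)]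
  constructor <;> rintro ⟨h₁, h₂⟩ <;> constructor <;> linarith

theorem octagonHalfWidth_of_mul_le (hc : 0 < c) {a : ℝ} (ha : (1 + 2 * c) * a ≤ 1) :
    octagonHalfWidth c a = (1 - c * a) / (1 + c) := by
  refine min_eq_right ?_
  rw [div_le_div_iff₀ (by positivity) hc]
  linarith

theorem octagonHalfWidth_of_le_mul (hc : 0 < c) {a : ℝ} (ha : 1 ≤ (1 + 2 * c) * a) :
    octagonHalfWidth c a = (1 - (1 + c) * a) / c := by
  refine min_eq_left ?_
  rw [div_le_div_iff₀ hc (by positivity)]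
  linarith

theorem octagonHalfWidth_nonneg (hc : 0 < c) {a : ℝ} (ha₀ : 0 ≤ a) (ha₁ : (1 + c) * a ≤ 1) :
    0 ≤ octagonHalfWidth c a :=
  le_min (div_nonneg (by linarith) hc.le) (div_nonneg (by nlinarith) (by positivity))

theorem octagonHalfWidth_nonpos (hc : 0 < c) {a : ℝ} (ha : 1 ≤ (1 + c) * a) :
    octagonHalfWidth c a ≤ 0 :=
  (min_le_left _ _).trans (div_nonpos_of_nonpos_of_nonneg (by linarith) hc.le)

theorem integral_octagonHalfWidth (hc : 0 < c) :
    ∫ a in 0..1 / (1 + c), octagonHalfWidth c a = 1 / ((1 + c) * (1 + 2 * c)) := by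
  have hW : Continuous (octagonHalfWidth c) := by unfold octagonHalfWidth; fun_prop
  have ht₀ : (0 : ℝ) ≤ 1 / (1 + 2 * c) := by positivity
  have htr : 1 / (1 + 2 * c) ≤ 1 / (1 + c) :=
    one_div_le_one_div_of_le (by positivity) (by linarith)
  have h₁ : ∫ a in 0..1 / (1 + 2 * c), octagonHalfWidth c a
      = ∫ a in 0..1 / (1 + 2 * c), (1 - c * a) / (1 + c) :=
    intervalIntegral.integral_congr fun a ha => by
      rw [uIcc_of_le ht₀] at ha
      exact octagonHalfWidth_of_mul_le hc ((le_div_iff₀' (by positivity)).1 ha.2)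
  have h₂ : ∫ a in 1 / (1 + 2 * c)..1 / (1 + c), octagonHalfWidth c a
      = ∫ a in 1 / (1 + 2 * c)..1 / (1 + c), (1 - (1 + c) * a) / c :=
    intervalIntegral.integral_congr fun a ha => by
      rw [uIcc_of_le htr] at ha
      exact octagonHalfWidth_of_le_mul hc ((div_le_iff₀' (by positivity)).1 ha.1)
  rw [← intervalIntegral.integral_add_adjacent_intervals (hW.intervalIntegrable _ _)
      (hW.intervalIntegrable _ _), h₁, h₂, intervalIntegral.integral_div,
    intervalIntegral.integral_div, integral_const_sub_mul, integral_const_sub_mul]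
  field_simp
  ring

theorem volume_octagon (hc : 0 < c) :
    volume (octagon c) = ENNReal.ofReal (4 / ((1 + c) * (1 + 2 * c))) := by
  have hW : Continuous (octagonHalfWidth c) := by unfold octagonHalfWidth; fun_prop
  have hoct : octagon c = {p | |p.2| ≤ octagonHalfWidth c |p.1|} :=
    ext fun p => mem_octagon_iff hc
  rw [hoct, Measure.volume_eq_prod, Measure.prod_setOf_abs_snd_le volume
      (w := fun x => octagonHalfWidth c |x|) (hW.comp continuous_abs).measurable,
    lintegral_ofReal_comp_abs (f := fun a => 2 * octagonHalfWidth c a) (r := 1 / (1 + c))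
      (continuous_const.mul hW) (by positivity)
      (fun a ha => mul_nonneg zero_le_two (octagonHalfWidth_nonneg hc ha.1
        ((le_div_iff₀' (by positivity)).1 ha.2)))
      (fun a ha => mul_nonpos_of_nonneg_of_nonpos zero_le_two
        (octagonHalfWidth_nonpos hc ((div_le_iff₀' (by positivity)).1 ha))),
    intervalIntegral.integral_const_mul, integral_octagonHalfWidth hc]
  ring_nf

end octagon

theorem stmt_3 :
    volume {p : ℝ × ℝ |
      |p.1 / Real.sqrt 2 + 0 / Real.sqrt 2| + |p.2 / Real.sqrt 2 - 0 / Real.sqrt 2|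
        + |(p.1 - p.2 - 0 - 0) / 2| + |(p.1 + p.2 - 0 + 0) / 2| ≤ 1}
      = ENNReal.ofReal (8 / (4 + 3 * Real.sqrt 2)) ∧
    (8 : ℝ) / (4 + 3 * Real.sqrt 2) = 12 * Real.sqrt 2 - 16 := by
  have hs : 0 < √2 := by positivity
  have hs2 : √2 ^ 2 = 2 := sq_sqrt zero_le_two
  refine ⟨?_, by rw [div_eq_iff (by positivity)]; linear_combination -36 * hs2⟩
  have hset : {p : ℝ × ℝ |
      |p.1 / √2 + 0 / √2| + |p.2 / √2 - 0 / √2|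
        + |(p.1 - p.2 - 0 - 0) / 2| + |(p.1 + p.2 - 0 + 0) / 2| ≤ 1} = octagon (√2)⁻¹ := by
    ext ⟨x, y⟩
    simp only [octagon, mem_ofPred_eq, zero_div, add_zero, sub_zero, abs_div, abs_of_pos hs,
      abs_two, mul_add, ← div_eq_inv_mul]
    have := abs_sub_add_abs_add x y
    constructor <;> intro h <;> linarith
  rw [hset, volume_octagon (by positivity)]
  congr 1
  field_simp
  linear_combination (8 + 12 * √2) * hs2
end

section
/- Define T(ε) = 8(1+ε²)/((√2+1−ε+√2ε)(√2+2−2ε+√2ε)). Then T(ε) = 12√2 − 16 + (408√2 − 576)ε² + o(ε²) as ε → 0. -/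
/-!
Multiplying out with `√2 ^ 2 = 2`, the denominator is the even polynomial
`4 (1 + ε²) + 3√2 (1 - ε²)`, so `T` is a rational function of `ε²` and subtracting the claimed
second-order polynomial leaves exactly `(4752 - 3360√2) ε⁴` over that denominator.
-/

open Real Filter Topology

namespace CrossPolytopeSection

lemma sqrt_two_denominator_mul_eq (ε : ℝ) :
    (√2 + 1 - ε + √2 * ε) * (√2 + 2 - 2 * ε + √2 * ε) = 4 * (1 + ε ^ 2) + 3 * √2 * (1 - ε ^ 2) := by
  linear_combination (1 + 2 * ε + ε ^ 2) * sq_sqrt zero_le_two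

lemma denominator_pos {ε : ℝ} (hε : |ε| ≤ 1) : 0 < 4 * (1 + ε ^ 2) + 3 * √2 * (1 - ε ^ 2) := by
  have : ε ^ 2 ≤ 1 := sq_le_one_iff_abs_le_one ε |>.mpr hε
  have : 0 ≤ √2 := sqrt_nonneg 2
  positivity

lemma second_order_remainder_eq {ε : ℝ} (hε : ε ≠ 0)
    (hD : 4 * (1 + ε ^ 2) + 3 * √2 * (1 - ε ^ 2) ≠ 0) :
    (8 * (1 + ε ^ 2) / (4 * (1 + ε ^ 2) + 3 * √2 * (1 - ε ^ 2))
        - (12 * √2 - 16) - (408 * √2 - 576) * ε ^ 2) / ε ^ 2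
      = (4752 - 3360 * √2) * ε ^ 2 / (4 * (1 + ε ^ 2) + 3 * √2 * (1 - ε ^ 2)) := by
  rw [div_eq_div_iff (pow_ne_zero 2 hε) hD, div_sub' hD, div_sub' hD, div_mul_eq_mul_div,
    mul_div_cancel_right₀ _ hD]
  linear_combination (1224 * ε ^ 4 - 1188 * ε ^ 2 - 36) * sq_sqrt zero_le_two

lemma tendsto_remainder :
    Tendsto (fun ε : ℝ => (4752 - 3360 * √2) * ε ^ 2 / (4 * (1 + ε ^ 2) + 3 * √2 * (1 - ε ^ 2)))
      (𝓝 0) (𝓝 0) := by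
  have hcont : ContinuousAt
      (fun ε : ℝ => (4752 - 3360 * √2) * ε ^ 2 / (4 * (1 + ε ^ 2) + 3 * √2 * (1 - ε ^ 2))) 0 :=
    ContinuousAt.div (by fun_prop) (by fun_prop) (denominator_pos (by simp)).ne'
  simpa using hcont.tendsto

end CrossPolytopeSection

open CrossPolytopeSection in
theorem stmt_8 :
    Filter.Tendsto
      (fun ε : ℝ =>
        (8 * (1 + ε^2) / ((Real.sqrt 2 + 1 - ε + Real.sqrt 2 * ε)
            * (Real.sqrt 2 + 2 - 2 * ε + Real.sqrt 2 * ε))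
          - (12 * Real.sqrt 2 - 16) - (408 * Real.sqrt 2 - 576) * ε^2) / ε^2)
      (nhdsWithin 0 {0}ᶜ) (nhds 0) := by
  refine (tendsto_remainder.mono_left nhdsWithin_le_nhds).congr' ?_
  have hsmall : ∀ᶠ ε in 𝓝[≠] (0 : ℝ), |ε| ≤ 1 :=
    eventually_nhdsWithin_of_eventually_nhds <| by
      filter_upwards [Metric.closedBall_mem_nhds (0 : ℝ) one_pos] with ε hε
      simpa using hε
  filter_upwards [self_mem_nhdsWithin, hsmall] with ε hε hε₁
  rw [sqrt_two_denominator_mul_eq, second_order_remainder_eq hε (denominator_pos hε₁).ne']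
end

section
/- A point with coordinates (x/√(1+ε²), y/√(1+ε²), −εx/√(1+ε²), εy/√(1+ε²)) belongs to the set C if and only if √2(1−ε)(|x|+|y|) + (1+ε)(|x+y|+|x−y|) ≤ 2√(1+ε²). -/
/-!
The point is the positive multiple `(1 + ε²)^(-1/2) • (x, y, -εx, εy)`, and the gauge of `C` is
absolutely homogeneous. On `(x, y, -εx, εy)` the four linear forms defining `C` evaluate to
`(1-ε)x/√2`, `(1-ε)y/√2`, `(1+ε)(x-y)/2` and `(1+ε)(x+y)/2`, whose absolute values are read off
directly when `|ε| ≤ 1`.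
-/

open Real

/-- The gauge of `C`, so that `C = {p | rotatedCrossNorm p ≤ 1}`. -/
noncomputable def rotatedCrossNorm (p : Fin 4 → ℝ) : ℝ :=
  |p 0 / √2 + p 2 / √2| + |p 1 / √2 - p 3 / √2| + |(p 0 - p 1 - p 2 - p 3) / 2|
    + |(p 0 + p 1 - p 2 + p 3) / 2|

theorem rotatedCrossNorm_smul (c : ℝ) (p : Fin 4 → ℝ) :
    rotatedCrossNorm (c • p) = |c| * rotatedCrossNorm p := by
  simp only [rotatedCrossNorm, Pi.smul_apply, smul_eq_mul, mul_div_assoc, ← mul_sub, ← mul_add,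
    abs_mul]

theorem two_mul_rotatedCrossNorm {ε : ℝ} (hε : |ε| ≤ 1) (x y : ℝ) :
    2 * rotatedCrossNorm ![x, y, -ε * x, ε * y]
      = √2 * (1 - ε) * (|x| + |y|) + (1 + ε) * (|x + y| + |x - y|) := by
  obtain ⟨hε₁, hε₂⟩ := abs_le.1 hε
  have h₁ : |1 - ε| = 1 - ε := abs_of_nonneg (by linarith)
  have h₂ : |1 + ε| = 1 + ε := abs_of_nonneg (by linarith)
  have hsqrt : (2 : ℝ) / √2 = √2 := div_sqrt
  simp only [rotatedCrossNorm, Matrix.cons_val_zero, Matrix.cons_val_one, Matrix.cons_val_two,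
    Matrix.cons_val_three, Matrix.head_cons, Matrix.tail_cons]
  rw [show x / √2 + -ε * x / √2 = (1 - ε) * x / √2 by ring,
    show y / √2 - ε * y / √2 = (1 - ε) * y / √2 by ring,
    show (x - y - -ε * x - ε * y) / 2 = (1 + ε) * (x - y) / 2 by ring,
    show (x + y - -ε * x + ε * y) / 2 = (1 + ε) * (x + y) / 2 by ring]
  simp only [abs_div, abs_mul, h₁, h₂, abs_two, abs_of_pos (sqrt_pos.2 two_pos)]
  linear_combination (1 - ε) * (|x| + |y|) * hsqrt

theorem stmt_9 (ε : ℝ) (hε : ε ∈ Set.Ioo (0:ℝ) 1) (x y : ℝ) :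
    (let p : Fin 4 → ℝ := ![x / Real.sqrt (1 + ε^2), y / Real.sqrt (1 + ε^2),
        -ε * x / Real.sqrt (1 + ε^2), ε * y / Real.sqrt (1 + ε^2)];
      |p 0 / Real.sqrt 2 + p 2 / Real.sqrt 2| + |p 1 / Real.sqrt 2 - p 3 / Real.sqrt 2|
        + |(p 0 - p 1 - p 2 - p 3) / 2| + |(p 0 + p 1 - p 2 + p 3) / 2| ≤ 1)
    ↔ Real.sqrt 2 * (1 - ε) * (|x| + |y|) + (1 + ε) * (|x + y| + |x - y|)
        ≤ 2 * Real.sqrt (1 + ε^2) := by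
  set s := √(1 + ε ^ 2)
  have hs : 0 < s := sqrt_pos.2 (by positivity)
  have hp : ![x / s, y / s, -ε * x / s, ε * y / s] = s⁻¹ • ![x, y, -ε * x, ε * y] := by
    ext i; fin_cases i <;> simp [div_eq_inv_mul]
  show rotatedCrossNorm ![x / s, y / s, -ε * x / s, ε * y / s] ≤ 1 ↔ _
  rw [hp, rotatedCrossNorm_smul, abs_of_pos (inv_pos.2 hs), inv_mul_le_one₀ hs,
    ← two_mul_rotatedCrossNorm (abs_le.2 ⟨by linarith [hε.1], hε.2.le⟩)]
  exact (mul_le_mul_iff_right₀ two_pos).symm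
end
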